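/- arXiv:1408.3627 — 2 statements merged into one kernel-verified Lean document; each statement's English description precedes it below -/
import Mathlib

section
/- Assume (H1)–(H4). Then the effective tensor admits the representation a^eff_{ijkl} = ∫_{𝕋^d} a_{pqrs}(0,y) ( δ_{rk}δ_{sl} + ∂_{rs}N_{kl}(y) ) ( δ_{pi}δ_{qj} + ∂_{pq}N_{ij}(y) ) dy, and in particular a^eff is symmetric: a^eff_{ijkl} = a^eff_{klij}. -/
open MeasureTheory Filter Topology

noncomputable section

/-- First-order partial derivative `∂ᵢu`. -/
def pd {d : ℕ} (u : (Fin d → ℝ) → ℝ) (i : Fin d) (x : Fin d → ℝ) : ℝ :=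
  fderiv ℝ u x (Pi.single i 1)

/-- Second-order partial derivative `∂ᵢ∂ⱼu`. -/
def pd2 {d : ℕ} (u : (Fin d → ℝ) → ℝ) (i j : Fin d) : (Fin d → ℝ) → ℝ :=
  pd (pd u j) i

/-- Laplacian. -/
def lap {d : ℕ} (u : (Fin d → ℝ) → ℝ) (x : Fin d → ℝ) : ℝ := ∑ i, pd2 u i i x

/-- The unit cell of the torus `𝕋^d`. -/
def cube (d : ℕ) : Set (Fin d → ℝ) := {y | ∀ i, y i ∈ Set.Icc (0:ℝ) 1}

/-- `ℤ^d`-periodicity (functions on the torus `𝕋^d`). -/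
def ZPer {d : ℕ} (g : (Fin d → ℝ) → ℝ) : Prop :=
  ∀ (y : Fin d → ℝ) (m : Fin d → ℤ), g (fun i => y i + (m i : ℝ)) = g y

/-- Membership in `H²₀(Ω)`, modeled by extension by zero: `u` is (twice continuously
differentiable and) zero together with its gradient outside `Ω`. -/
def MemH20 {d : ℕ} (Ω : Set (Fin d → ℝ)) (u : (Fin d → ℝ) → ℝ) : Prop :=
  ContDiff ℝ 2 u ∧ ∀ x ∉ Ω, u x = 0 ∧ ∀ i, pd u i x = 0

/-- `L²` norm over a set. -/
def l2n {d : ℕ} (Ω : Set (Fin d → ℝ)) (f : (Fin d → ℝ) → ℝ) : ℝ :=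
  Real.sqrt (∫ x in Ω, f x ^ 2)

/-- The coefficients of the operator. -/
structure Coeffs (d : ℕ) where
  a : (Fin d → ℝ) → (Fin d → ℝ) → Fin d → Fin d → Fin d → Fin d → ℝ
  b : (Fin d → ℝ) → (Fin d → ℝ) → Fin d → Fin d → ℝ
  c : (Fin d → ℝ) → (Fin d → ℝ) → ℝ
  Λ : ℝ

/-- Local average `c̄(x) = ∫_{𝕋^d} c(x,y) dy`. -/
def cbar {d : ℕ} (P : Coeffs d) (x : Fin d → ℝ) : ℝ := ∫ y in cube d, P.c x y

/-- The Hessian matrix `H = ∇∇c̄(0)`. -/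
def Hmat {d : ℕ} (P : Coeffs d) (i j : Fin d) : ℝ := pd2 (cbar P) i j 0

/-- Hypotheses (H1)–(H4). -/
structure Hyp {d : ℕ} (Ω : Set (Fin d → ℝ)) (P : Coeffs d) : Prop where
  Λpos : 0 < P.Λ
  Ωopen : IsOpen Ω
  Ωbdd : Bornology.IsBounded Ω
  a_meas : ∀ i j k l, Measurable fun p : (Fin d → ℝ) × (Fin d → ℝ) => P.a p.1 p.2 i j k l
  b_meas : ∀ i j, Measurable fun p : (Fin d → ℝ) × (Fin d → ℝ) => P.b p.1 p.2 i j
  c_meas : Measurable fun p : (Fin d → ℝ) × (Fin d → ℝ) => P.c p.1 p.2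
  a_contx : ∀ y i j k l, Continuous fun x => P.a x y i j k l
  b_contx : ∀ y i j, Continuous fun x => P.b x y i j
  c_contx : ∀ y, ContDiff ℝ 2 fun x => P.c x y
  a_per : ∀ x i j k l, ZPer fun y => P.a x y i j k l
  b_per : ∀ x i j, ZPer fun y => P.b x y i j
  c_per : ∀ x, ZPer fun y => P.c x y
  a_bdd : ∀ x y i j k l, |P.a x y i j k l| ≤ P.Λ⁻¹
  b_bdd : ∀ x y i j, |P.b x y i j| ≤ P.Λ⁻¹
  c_bdd : ∃ M, ∀ x y, |P.c x y| ≤ M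
  a_symm : ∀ x y i j k l, P.a x y i j k l = P.a x y k l i j
  b_symm : ∀ x y i j, P.b x y i j = P.b x y j i
  a_ell : ∀ x y (ξ : Fin d → Fin d → ℝ),
    P.Λ * (∑ i, ∑ j, ξ i j ^ 2) ≤ ∑ i, ∑ j, ∑ k, ∑ l, P.a x y i j k l * ξ i j * ξ k l
  c_pos : ∀ x, ∀ᵐ y : Fin d → ℝ, 0 < P.c x y
  cbar_smooth : ContDiff ℝ 2 (cbar P)
  zero_mem : (0 : Fin d → ℝ) ∈ Ω
  cbar_min : ∀ x ∈ closure Ω, x ≠ 0 → cbar P 0 < cbar P x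
  hess_pos : ∀ ξ : Fin d → ℝ, ξ ≠ 0 → 0 < ∑ i, ∑ j, Hmat P i j * ξ i * ξ j

/-- The hypothesis (H5): uniform ellipticity of `b`. -/
def HypB {d : ℕ} (P : Coeffs d) (Λ' : ℝ) : Prop :=
  0 < Λ' ∧ ∀ x y (ξ : Fin d → ℝ),
    Λ' * (∑ i, ξ i ^ 2) ≤ ∑ i, ∑ j, P.b x y i j * ξ i * ξ j

/-- The bilinear form `A_ε` of the original problem. -/
def Aeps {d : ℕ} (P : Coeffs d) (Ω : Set (Fin d → ℝ)) (α β ε : ℝ)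
    (u v : (Fin d → ℝ) → ℝ) : ℝ :=
  (∫ x in Ω, ∑ i, ∑ j, ∑ k, ∑ l, P.a x (ε⁻¹ • x) i j k l * pd2 u i j x * pd2 v k l x)
  + ε ^ (-α) * (∫ x in Ω, ∑ i, ∑ j, P.b x (ε⁻¹ • x) i j * pd u i x * pd v j x)
  + ε ^ (-β) * (∫ x in Ω, P.c x (ε⁻¹ • x) * u x * v x)

/-- `(λ, u)` is an eigenpair of the Dirichlet spectral problem, in the weak sense. -/
def IsEigenpair {d : ℕ} (P : Coeffs d) (Ω : Set (Fin d → ℝ)) (α β ε : ℝ)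
    (lam : ℝ) (u : (Fin d → ℝ) → ℝ) : Prop :=
  MemH20 Ω u ∧ (∫ x in Ω, u x ^ 2) ≠ 0 ∧
    ∀ v, MemH20 Ω v → Aeps P Ω α β ε u v = lam * ∫ x in Ω, u x * v x

/-- An increasing enumeration (with multiplicity) of the spectrum of the Dirichlet problem,
realized by an orthogonal basis of eigenfunctions with `∫ uₖ² = c`. -/
def EigenSystem {d : ℕ} (P : Coeffs d) (Ω : Set (Fin d → ℝ)) (α β ε : ℝ)
    (lam : ℕ → ℝ) (u : ℕ → (Fin d → ℝ) → ℝ) (c : ℝ) : Prop :=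
  Monotone lam ∧ (∀ k, IsEigenpair P Ω α β ε (lam k) (u k)) ∧
  (∀ k l, (∫ x in Ω, u k x * u l x) = if k = l then c else 0) ∧
  (∀ f : (Fin d → ℝ) → ℝ, MemLp f 2 (volume.restrict Ω) →
    (∀ k, (∫ x in Ω, f x * u k x) = 0) → f =ᵐ[volume.restrict Ω] 0)

/-- Weak solution (with `C²`, periodic representative) of the cell problem
`∂ᵢⱼ(a_{ijmn}(0,y) ∂ₘₙ N_{kl}) = -∂ᵢⱼ a_{ijkl}(0,y)` on `𝕋^d`. -/
def IsCellSol {d : ℕ} (P : Coeffs d) (k l : Fin d) (N : (Fin d → ℝ) → ℝ) : Prop :=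
  ContDiff ℝ 2 N ∧ ZPer N ∧
  ∀ ψ : (Fin d → ℝ) → ℝ, ContDiff ℝ 2 ψ → ZPer ψ →
    (∫ y in cube d, ∑ i, ∑ j, ∑ m, ∑ n, P.a 0 y i j m n * pd2 N m n y * pd2 ψ i j y)
      = -∫ y in cube d, ∑ i, ∑ j, P.a 0 y i j k l * pd2 ψ i j y

/-- The effective coefficients `a^eff`. -/
def aeffOf {d : ℕ} (P : Coeffs d) (N : Fin d → Fin d → (Fin d → ℝ) → ℝ)
    (i j k l : Fin d) : ℝ :=
  ∫ y in cube d, ((∑ m, ∑ n, P.a 0 y i j m n * pd2 (N k l) m n y) + P.a 0 y i j k l)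

/-- The averaged coefficients `b̄(0)`. -/
def bbar0 {d : ℕ} (P : Coeffs d) (i j : Fin d) : ℝ := ∫ y in cube d, P.b 0 y i j

/-- Membership in `H²(ℝ^d) ∩ L²(ℝ^d, |z|²dz)` (with `C²` representative). -/
def MemH2w {d : ℕ} (u : (Fin d → ℝ) → ℝ) : Prop :=
  ContDiff ℝ 2 u ∧ MemLp u 2 (volume : Measure (Fin d → ℝ)) ∧
  (∀ i, MemLp (pd u i) 2 (volume : Measure (Fin d → ℝ))) ∧
  (∀ i j, MemLp (pd2 u i j) 2 (volume : Measure (Fin d → ℝ))) ∧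
  Integrable (fun z : Fin d → ℝ => (∑ i, z i ^ 2) * u z ^ 2)

/-- The effective bilinear form (without the `μ` zero-order term). -/
def EffForm {d : ℕ} (aeff : Fin d → Fin d → Fin d → Fin d → ℝ)
    (bb : Fin d → Fin d → ℝ) (Hm : Fin d → Fin d → ℝ)
    (u v : (Fin d → ℝ) → ℝ) : ℝ :=
  (∫ z : Fin d → ℝ, ∑ i, ∑ j, ∑ k, ∑ l, aeff i j k l * pd2 u k l z * pd2 v i j z)
  + (∫ z : Fin d → ℝ, ∑ i, ∑ j, bb i j * pd u j z * pd v i z)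
  + (∫ z : Fin d → ℝ, (1/2) * (∑ i, ∑ j, Hm i j * z i * z j) * u z * v z)

/-- `(η, v)` is an eigenpair of the effective problem
`∂ᵢⱼ(a^eff ∂ₖₗ v) - ∂ᵢ(b̄ᵢⱼ(0)∂ⱼv) + ½(Hz·z)v = ηv` on `ℝ^d`, in the weak sense. -/
def IsEffEigen {d : ℕ} (aeff : Fin d → Fin d → Fin d → Fin d → ℝ)
    (bb : Fin d → Fin d → ℝ) (Hm : Fin d → Fin d → ℝ)
    (η : ℝ) (v : (Fin d → ℝ) → ℝ) : Prop :=
  MemH2w v ∧ (∫ z : Fin d → ℝ, v z ^ 2) ≠ 0 ∧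
  ∀ φ : (Fin d → ℝ) → ℝ, ContDiff ℝ 2 φ → HasCompactSupport φ →
    EffForm aeff bb Hm v φ = η * ∫ z : Fin d → ℝ, v z * φ z

/-- Increasing enumeration of the spectrum of the effective problem with orthonormal
complete eigenfunctions. -/
def EffEigenSystem {d : ℕ} (aeff : Fin d → Fin d → Fin d → Fin d → ℝ)
    (bb : Fin d → Fin d → ℝ) (Hm : Fin d → Fin d → ℝ)
    (η : ℕ → ℝ) (v : ℕ → (Fin d → ℝ) → ℝ) : Prop :=
  Monotone η ∧ (∀ k, IsEffEigen aeff bb Hm (η k) (v k)) ∧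
  (∀ k l, (∫ z : Fin d → ℝ, v k z * v l z) = if k = l then 1 else 0) ∧
  (∀ f : (Fin d → ℝ) → ℝ, MemLp f 2 (volume : Measure (Fin d → ℝ)) →
    (∀ k, (∫ z : Fin d → ℝ, f z * v k z) = 0) → f =ᵐ[volume] 0)

/-- The rescaled domain `Ω_ε = ε^{-1/6}Ω`. -/
def Omr {d : ℕ} (Ω : Set (Fin d → ℝ)) (ε : ℝ) : Set (Fin d → ℝ) :=
  {z | (ε ^ ((1:ℝ)/6)) • z ∈ Ω}

/-- The rescaled bilinear form `A_ε` (case `β = 3α = 1`), including the shift `μ`. -/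
def Ares {d : ℕ} (P : Coeffs d) (Ω : Set (Fin d → ℝ)) (μ ε : ℝ)
    (u v : (Fin d → ℝ) → ℝ) : ℝ :=
  (∫ z in Omr Ω ε, ∑ i, ∑ j, ∑ k, ∑ l,
      P.a ((ε ^ ((1:ℝ)/6)) • z) ((ε ^ (-(5:ℝ)/6)) • z) i j k l * pd2 u k l z * pd2 v i j z)
  + (∫ z in Omr Ω ε, ∑ i, ∑ j,
      P.b ((ε ^ ((1:ℝ)/6)) • z) ((ε ^ (-(5:ℝ)/6)) • z) i j * pd u j z * pd v i z)
  + ε ^ (-(1:ℝ)/3) * (∫ z in Omr Ω ε,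
      (P.c ((ε ^ ((1:ℝ)/6)) • z) ((ε ^ (-(5:ℝ)/6)) • z) - cbar P 0) * u z * v z)
  + μ * ∫ z in Omr Ω ε, u z * v z

/-- Weak solution of the effective equation
`∂ᵢⱼ(a^eff∂ₖₗV) - ∂ᵢ(b̄ᵢⱼ∂ⱼV) + ½(Hz·z)V + μV = f` on `ℝ^d`. -/
def IsEffSol {d : ℕ} (aeff : Fin d → Fin d → Fin d → Fin d → ℝ)
    (bb : Fin d → Fin d → ℝ) (Hm : Fin d → Fin d → ℝ) (μ : ℝ)
    (f V : (Fin d → ℝ) → ℝ) : Prop :=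
  MemH2w V ∧ ∀ φ : (Fin d → ℝ) → ℝ, ContDiff ℝ 2 φ → HasCompactSupport φ →
    EffForm aeff bb Hm V φ + μ * (∫ z : Fin d → ℝ, V z * φ z) = ∫ z : Fin d → ℝ, f z * φ z

/-- Weak convergence in `L²(ℝ^d)` of a sequence of functions. -/
def WeakL2 {d : ℕ} (F : ℕ → (Fin d → ℝ) → ℝ) (f : (Fin d → ℝ) → ℝ) : Prop :=
  ∀ g : (Fin d → ℝ) → ℝ, MemLp g 2 (volume : Measure (Fin d → ℝ)) →
    Tendsto (fun n => ∫ z : Fin d → ℝ, F n z * g z) atTop (𝓝 (∫ z : Fin d → ℝ, f z * g z))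

/-- Strong convergence in `L²(ℝ^d)`. -/
def StrongL2 {d : ℕ} (F : ℕ → (Fin d → ℝ) → ℝ) (f : (Fin d → ℝ) → ℝ) : Prop :=
  Tendsto (fun n => ∫ z : Fin d → ℝ, (F n z - f z) ^ 2) atTop (𝓝 0)

/-- Weak convergence in `H²(ℝ^d)`. -/
def WeakH2 {d : ℕ} (F : ℕ → (Fin d → ℝ) → ℝ) (f : (Fin d → ℝ) → ℝ) : Prop :=
  WeakL2 F f ∧ (∀ i, WeakL2 (fun n => pd (F n) i) (pd f i)) ∧
  (∀ i j, WeakL2 (fun n => pd2 (F n) i j) (pd2 f i j))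

/-- Weak convergence in `H¹(ℝ^d)`. -/
def WeakH1 {d : ℕ} (F : ℕ → (Fin d → ℝ) → ℝ) (f : (Fin d → ℝ) → ℝ) : Prop :=
  WeakL2 F f ∧ (∀ i, WeakL2 (fun n => pd (F n) i) (pd f i))

/-- Admissible test functions `Φ(z,ζ)` for two-scale convergence: continuous, compactly
supported in `z`, periodic in `ζ`. -/
def Adm2 {d : ℕ} (Φ : (Fin d → ℝ) → (Fin d → ℝ) → ℝ) : Prop :=
  Continuous (fun p : (Fin d → ℝ) × (Fin d → ℝ) => Φ p.1 p.2) ∧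
  (∃ K : Set (Fin d → ℝ), IsCompact K ∧ ∀ z ∉ K, ∀ ζ, Φ z ζ = 0) ∧
  ∀ z, ZPer (Φ z)

/-- Two-scale convergence in `L²(ℝ^d)` at scale `ε^{5/6}` along `εs`. -/
def TwoScale {d : ℕ} (εs : ℕ → ℝ) (F : ℕ → (Fin d → ℝ) → ℝ)
    (w : (Fin d → ℝ) → (Fin d → ℝ) → ℝ) : Prop :=
  ∀ Φ, Adm2 Φ →
    Tendsto (fun n => ∫ z : Fin d → ℝ, F n z * Φ z (((εs n) ^ (-(5:ℝ)/6)) • z))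
      atTop (𝓝 (∫ z : Fin d → ℝ, ∫ ζ in cube d, w z ζ * Φ z ζ))
end

/-! Testing the cell problem for `N_{kl}` against `ψ = N_{ij}` gives
`∫ a(∇²N_{kl}, ∇²N_{ij}) = -∫ a(e_{kl}, ∇²N_{ij})`, which is exactly the term needed to
turn the defining formula of `a^eff_{ijkl}` into the energy
`∫ a(e_{kl} + ∇²N_{kl}, e_{ij} + ∇²N_{ij})`. That energy is symmetric under `(ij) ↔ (kl)`
because `a` is. -/

open Finset

lemma ContDiff.continuous_pd2 {d : ℕ} {u : (Fin d → ℝ) → ℝ} (hu : ContDiff ℝ 2 u)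
    (i j : Fin d) : Continuous (pd2 u i j) := by
  have hpd : ContDiff ℝ 1 (pd u j) := (hu.fderiv_right (m := 1) le_rfl).clm_apply contDiff_const
  exact (hpd.continuous_fderiv one_ne_zero).clm_apply continuous_const

lemma cube_eq_pi (d : ℕ) : cube d = Set.univ.pi fun _ => Set.Icc (0 : ℝ) 1 := by
  ext y; simp [cube, Set.pi]

lemma isCompact_cube (d : ℕ) : IsCompact (cube d) := by
  rw [cube_eq_pi]; exact isCompact_univ_pi fun _ => isCompact_Icc

lemma Hyp.integrableOn_cube_a_mul {d : ℕ} {Ω : Set (Fin d → ℝ)} {P : Coeffs d}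
    (hH : Hyp Ω P) {g : (Fin d → ℝ) → ℝ} (hg : Continuous g) (p q r s : Fin d) :
    IntegrableOn (fun y => P.a 0 y p q r s * g y) (cube d) :=
  (hg.continuousOn.integrableOn_compact (isCompact_cube d)).bdd_mul
    ((hH.a_meas p q r s).comp (measurable_const.prodMk measurable_id)).aestronglyMeasurable
    (ae_of_all _ fun y => hH.a_bdd 0 y p q r s)

section TensorSums

variable {ι R : Type*} [Fintype ι] [CommSemiring R]

lemma sum_four_swap (f : ι → ι → ι → ι → R) :
    ∑ p, ∑ q, ∑ r, ∑ s, f p q r s = ∑ p, ∑ q, ∑ r, ∑ s, f r s p q := by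
  simpa only [Fintype.sum_prod_type] using
    (Finset.sum_comm : ∑ x : ι × ι, ∑ y : ι × ι, f x.1 x.2 y.1 y.2 = _)

lemma sum_tensor_mul_mul_comm {a : ι → ι → ι → ι → R}
    (ha : ∀ p q r s, a p q r s = a r s p q) (X Y : ι → ι → R) :
    ∑ p, ∑ q, ∑ r, ∑ s, a p q r s * X r s * Y p q
      = ∑ p, ∑ q, ∑ r, ∑ s, a p q r s * Y r s * X p q := by
  rw [sum_four_swap]
  refine sum_congr rfl fun p _ => sum_congr rfl fun q _ =>
    sum_congr rfl fun r _ => sum_congr rfl fun s _ => ?_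
  rw [ha]; ring

lemma sum_tensor_delta_add_mul_delta_add [DecidableEq ι] (a : ι → ι → ι → ι → R)
    (X Y : ι → ι → R) (i j k l : ι) :
    ∑ p, ∑ q, ∑ r, ∑ s, a p q r s
        * ((if r = k then (1 : R) else 0) * (if s = l then (1 : R) else 0) + X r s)
        * ((if p = i then (1 : R) else 0) * (if q = j then (1 : R) else 0) + Y p q)
      = ((∑ r, ∑ s, a i j r s * X r s) + a i j k l) + (∑ p, ∑ q, a p q k l * Y p q)
        + ∑ p, ∑ q, ∑ r, ∑ s, a p q r s * X r s * Y p q := by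
  simp only [mul_add, add_mul, sum_add_distrib, mul_ite, ite_mul, mul_zero, zero_mul, mul_one,
    sum_ite_irrel, sum_const_zero, sum_ite_eq', mem_univ, if_true]
  ring

end TensorSums

theorem aeffOf_eq_integral_energy {d : ℕ} {Ω : Set (Fin d → ℝ)} {P : Coeffs d}
    (hH : Hyp Ω P) {N : Fin d → Fin d → (Fin d → ℝ) → ℝ}
    (hN : ∀ k l, IsCellSol P k l (N k l)) (i j k l : Fin d) :
    aeffOf P N i j k l =
      ∫ y in cube d, ∑ p, ∑ q, ∑ r, ∑ s, P.a 0 y p q r s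
        * ((if r = k then (1:ℝ) else 0) * (if s = l then (1:ℝ) else 0) + pd2 (N k l) r s y)
        * ((if p = i then (1:ℝ) else 0) * (if q = j then (1:ℝ) else 0) + pd2 (N i j) p q y) := by
  have hcont : ∀ k l r s, Continuous (pd2 (N k l) r s) := fun k l => (hN k l).1.continuous_pd2
  have hA : IntegrableOn
      (fun y => (∑ r, ∑ s, P.a 0 y i j r s * pd2 (N k l) r s y) + P.a 0 y i j k l) (cube d) :=
    (integrable_finsetSum _ fun r _ => integrable_finsetSum _ fun s _ =>
      hH.integrableOn_cube_a_mul (hcont k l r s) i j r s).add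
      (by simpa only [IntegrableOn, mul_one] using
        hH.integrableOn_cube_a_mul (g := fun _ => 1) continuous_const i j k l)
  have hB : IntegrableOn (fun y => ∑ p, ∑ q, P.a 0 y p q k l * pd2 (N i j) p q y) (cube d) :=
    integrable_finsetSum _ fun p _ => integrable_finsetSum _ fun q _ =>
      hH.integrableOn_cube_a_mul (hcont i j p q) p q k l
  have hC : IntegrableOn (fun y => ∑ p, ∑ q, ∑ r, ∑ s,
      P.a 0 y p q r s * pd2 (N k l) r s y * pd2 (N i j) p q y) (cube d) :=
    integrable_finsetSum _ fun p _ => integrable_finsetSum _ fun q _ =>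
      integrable_finsetSum _ fun r _ => integrable_finsetSum _ fun s _ => by
        simpa only [IntegrableOn, mul_assoc, Pi.mul_apply] using
          hH.integrableOn_cube_a_mul ((hcont k l r s).mul (hcont i j p q)) p q r s
  have hcell := (hN k l).2.2 (N i j) (hN i j).1 (hN i j).2.1
  simp_rw [sum_tensor_delta_add_mul_delta_add]
  rw [integral_add ?_ hC, integral_add hA hB, hcell, aeffOf]
  · ring
  · exact hA.add hB

theorem statement6_general {d : ℕ} (Ω : Set (Fin d → ℝ)) (P : Coeffs d)
    (hH : Hyp Ω P)
    (N : Fin d → Fin d → (Fin d → ℝ) → ℝ)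
    (hN : ∀ k l, IsCellSol P k l (N k l)) :
    (∀ i j k l, aeffOf P N i j k l =
      ∫ y in cube d, ∑ p, ∑ q, ∑ r, ∑ s, P.a 0 y p q r s
        * ((if r = k then (1:ℝ) else 0) * (if s = l then (1:ℝ) else 0) + pd2 (N k l) r s y)
        * ((if p = i then (1:ℝ) else 0) * (if q = j then (1:ℝ) else 0) + pd2 (N i j) p q y)) ∧
    (∀ i j k l, aeffOf P N i j k l = aeffOf P N k l i j) := by
  refine ⟨aeffOf_eq_integral_energy hH hN, fun i j k l => ?_⟩
  rw [aeffOf_eq_integral_energy hH hN i j k l, aeffOf_eq_integral_energy hH hN k l i j]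
  congr 1 with y
  exact sum_tensor_mul_mul_comm (hH.a_symm 0 y) _ _

/-- The representation of the effective tensor and its symmetry:
`a^eff_{ijkl} = ∫_{𝕋^d} a_{pqrs}(0,y)(δ_{rk}δ_{sl} + ∂_{rs}N_{kl})(δ_{pi}δ_{qj} + ∂_{pq}N_{ij}) dy`
and `a^eff_{ijkl} = a^eff_{klij}`. -/
theorem statement6 {d : ℕ} (hd : 1 ≤ d) (Ω : Set (Fin d → ℝ)) (P : Coeffs d)
    (hH : Hyp Ω P)
    (N : Fin d → Fin d → (Fin d → ℝ) → ℝ)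
    (hN : ∀ k l, IsCellSol P k l (N k l)) :
    (∀ i j k l, aeffOf P N i j k l =
      ∫ y in cube d, ∑ p, ∑ q, ∑ r, ∑ s, P.a 0 y p q r s
        * ((if r = k then (1:ℝ) else 0) * (if s = l then (1:ℝ) else 0) + pd2 (N k l) r s y)
        * ((if p = i then (1:ℝ) else 0) * (if q = j then (1:ℝ) else 0) + pd2 (N i j) p q y)) ∧
    (∀ i j k l, aeffOf P N i j k l = aeffOf P N k l i j) :=
  statement6_general Ω P hH N hN
end

section
/- Assume (H1)–(H3) and (H5). Then the effective matrix b^eff defined with the fourth-order cell correctors, b^eff_{ij} = ∫_{𝕋^d} b_{ik}(0,y)(δ_{kj} + ∂_k M_j(y)) dy, is symmetric and coercive on ℝ^d: there exists C > 0 such that b^eff_{ij}ξ_iξ_j ≥ C|ξ|² for all ξ ∈ ℝ^d. -/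
/-!
Testing the cell problem for `Mₙ` with `Mₘ` identifies `b^eff_{mn}` with the energy
`E(n,m) = ∫ b (eₙ + ∇Mₙ)·(eₘ + ∇Mₘ) + ∫ a ∇²Mₙ : ∇²Mₘ`, which is symmetric by (H2).
Hence `b^eff ξ·ξ = ∫ b w·w + ∫ a ∇²(ξ·M) : ∇²(ξ·M)` with `w = ξ + ∇(ξ·M)`. The second term is
nonnegative by (H3). The gradient of a periodic function has mean zero, so `∫ w = ξ`, and (H5)
with Jensen's inequality on the unit cell bounds the first term below by `Λ' |ξ|²`.
-/

open MeasureTheory Filter Topology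

noncomputable section

/-- Hypotheses (H1)–(H3) (the parts concerning the coefficients `a` and `b`). -/
structure HypAB {d : ℕ} (P : Coeffs d) : Prop where
  Λpos : 0 < P.Λ
  a_meas : ∀ i j k l, Measurable fun p : (Fin d → ℝ) × (Fin d → ℝ) => P.a p.1 p.2 i j k l
  b_meas : ∀ i j, Measurable fun p : (Fin d → ℝ) × (Fin d → ℝ) => P.b p.1 p.2 i j
  a_contx : ∀ y i j k l, Continuous fun x => P.a x y i j k l
  b_contx : ∀ y i j, Continuous fun x => P.b x y i j
  a_per : ∀ x i j k l, ZPer fun y => P.a x y i j k l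
  b_per : ∀ x i j, ZPer fun y => P.b x y i j
  a_bdd : ∀ x y i j k l, |P.a x y i j k l| ≤ P.Λ⁻¹
  b_bdd : ∀ x y i j, |P.b x y i j| ≤ P.Λ⁻¹
  a_symm : ∀ x y i j k l, P.a x y i j k l = P.a x y k l i j
  b_symm : ∀ x y i j, P.b x y i j = P.b x y j i
  a_ell : ∀ x y (ξ : Fin d → Fin d → ℝ),
    P.Λ * (∑ i, ∑ j, ξ i j ^ 2) ≤ ∑ i, ∑ j, ∑ k, ∑ l, P.a x y i j k l * ξ i j * ξ k l

/-- Weak (periodic, `C²`) solution of the fourth-order cell problem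
`∂ᵢⱼ(a_{ijkl}(0,y)∂ₖₗMₙ) - ∂ᵢ(b_{ij}(0,y)∂ⱼMₙ) = ∂ᵢb_{ni}(0,y)` on `𝕋^d`. -/
def IsCellM {d : ℕ} (P : Coeffs d) (n : Fin d) (M : (Fin d → ℝ) → ℝ) : Prop :=
  ContDiff ℝ 2 M ∧ ZPer M ∧
  ∀ ψ : (Fin d → ℝ) → ℝ, ContDiff ℝ 2 ψ → ZPer ψ →
    (∫ y in cube d, ∑ i, ∑ j, ∑ k, ∑ l, P.a 0 y i j k l * pd2 M k l y * pd2 ψ i j y)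
    + (∫ y in cube d, ∑ i, ∑ j, P.b 0 y i j * pd M j y * pd ψ i y)
    = -∫ y in cube d, ∑ i, P.b 0 y n i * pd ψ i y


open Finset

section Cube

variable {d : ℕ}

theorem cube_eq_Icc (d : ℕ) : cube d = Set.Icc 0 1 := by
  ext y
  simp [cube, Set.mem_Icc, Pi.le_def, forall_and]

theorem measurableSet_cube (d : ℕ) : MeasurableSet (cube d) :=
  cube_eq_Icc d ▸ measurableSet_Icc

theorem volume_cube (d : ℕ) : volume (cube d) = 1 := by
  simp [cube_eq_Icc, Real.volume_Icc_pi]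

instance (d : ℕ) : IsProbabilityMeasure (volume.restrict (cube d)) :=
  ⟨by simp [volume_cube]⟩

theorem Continuous.integrableOn_cube {g : (Fin d → ℝ) → ℝ} (hg : Continuous g) :
    IntegrableOn g (cube d) := by
  rw [cube_eq_Icc]
  exact hg.integrableOn_Icc

theorem continuous_pd {g : (Fin d → ℝ) → ℝ} (hg : ContDiff ℝ 1 g) (k : Fin d) :
    Continuous (pd g k) :=
  (hg.continuous_fderiv one_ne_zero).clm_apply continuous_const

theorem continuous_pd2 {g : (Fin d → ℝ) → ℝ} (hg : ContDiff ℝ 2 g) (k l : Fin d) :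
    Continuous (pd2 g k l) :=
  continuous_pd ((hg.fderiv_right one_add_one_eq_two.le).clm_apply contDiff_const) k

theorem ZPer.insertNth_one_eq_insertNth_zero {n : ℕ} {g : (Fin (n + 1) → ℝ) → ℝ} (hg : ZPer g)
    (k : Fin (n + 1)) (x : Fin n → ℝ) : g (k.insertNth 1 x) = g (k.insertNth 0 x) := by
  convert hg (k.insertNth 0 x) (Pi.single k 1) using 2
  rw [Fin.insertNth_eq_iff]
  simp [Fin.removeNth, funext_iff, Pi.single_apply, Fin.succAbove_ne]

theorem integral_pd_eq_zero_of_zPer {g : (Fin d → ℝ) → ℝ} (hg : ContDiff ℝ 1 g) (hper : ZPer g)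
    (k : Fin d) : ∫ y in cube d, pd g k y = 0 := by
  obtain ⟨n, rfl⟩ := Nat.exists_eq_add_one_of_ne_zero k.pos.ne'
  set f : Fin (n + 1) → (Fin (n + 1) → ℝ) → ℝ := Pi.single k g with hf
  set f' : Fin (n + 1) → (Fin (n + 1) → ℝ) → (Fin (n + 1) → ℝ) →L[ℝ] ℝ :=
    Pi.single k (fderiv ℝ g) with hf'
  have hpd : ∀ x, ∑ i, f' i x (Pi.single i 1) = pd g k x := fun x => by
    rw [Fintype.sum_eq_single k fun i hi => by simp [hf', Pi.single_eq_of_ne hi]]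
    simp [hf', pd]
  have hdiv := integral_divergence_of_hasFDerivAt_off_countable' (a := 0) (b := 1) zero_le_one
    f f' ∅ Set.countable_empty
    (fun i => by
      rcases eq_or_ne i k with rfl | hi
      · simpa [hf] using hg.continuous.continuousOn
      · rw [hf, Pi.single_eq_of_ne hi]
        exact continuousOn_const)
    (fun x _ i => by
      rcases eq_or_ne i k with rfl | hi
      · simpa [hf, hf'] using (hg.differentiable one_ne_zero x).hasFDerivAt
      · rw [hf, hf', Pi.single_eq_of_ne hi, Pi.single_eq_of_ne hi]
        exact hasFDerivAt_const (0 : ℝ) x)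
    (by simpa only [hpd, ← cube_eq_Icc] using (continuous_pd hg k).integrableOn_cube)
  calc ∫ y in cube (n + 1), pd g k y = ∫ x in Set.Icc 0 1, ∑ i, f' i x (Pi.single i 1) := by
        rw [cube_eq_Icc]
        exact setIntegral_congr_fun measurableSet_Icc fun x _ => (hpd x).symm
    _ = 0 := hdiv.trans <| Fintype.sum_eq_zero _ fun i => by
        rcases eq_or_ne i k with rfl | hi
        · simp [hf, hper.insertNth_one_eq_insertNth_zero]
        · simp [hf, Pi.single_eq_of_ne hi]

end Cube

theorem sq_integral_le_integral_sq {α : Type*} [MeasurableSpace α] {μ : Measure α}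
    [IsProbabilityMeasure μ] {f : α → ℝ} (hf : MemLp f 2 μ) :
    (∫ x, f x ∂μ) ^ 2 ≤ ∫ x, f x ^ 2 ∂μ := by
  have := ProbabilityTheory.variance_nonneg f μ
  rw [ProbabilityTheory.variance_eq_sub hf] at this
  simpa using this

theorem sum_sum_sum_sum_comm {κ : Type*} [Fintype κ] (f : κ → κ → κ → κ → ℝ) :
    ∑ i, ∑ j, ∑ k, ∑ l, f i j k l = ∑ k, ∑ l, ∑ i, ∑ j, f i j k l :=
  calc _ = ∑ p : κ × κ, ∑ q : κ × κ, f p.1 p.2 q.1 q.2 := by simp only [Fintype.sum_prod_type]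
    _ = ∑ q : κ × κ, ∑ p : κ × κ, f p.1 p.2 q.1 q.2 := Finset.sum_comm
    _ = _ := by simp only [Fintype.sum_prod_type]

theorem sum_mul_sum_mul_sum {ι κ : Type*} [Fintype ι] [Fintype κ] (ξ : ι → ℝ) (c : κ → ℝ)
    (u v : ι → κ → ℝ) :
    ∑ p, c p * (∑ n, ξ n * u n p) * (∑ m, ξ m * v m p)
      = ∑ n, ∑ m, ξ n * ξ m * ∑ p, c p * u n p * v m p :=
  calc ∑ p, c p * (∑ n, ξ n * u n p) * (∑ m, ξ m * v m p)
      = ∑ p, ∑ n, ∑ m, ξ n * ξ m * (c p * u n p * v m p) := by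
        refine sum_congr rfl fun p _ => ?_
        rw [mul_assoc, Finset.sum_mul_sum, Finset.mul_sum]
        exact sum_congr rfl fun n _ => by
          rw [Finset.mul_sum]
          exact sum_congr rfl fun m _ => by ring
    _ = ∑ n, ∑ m, ∑ p, ξ n * ξ m * (c p * u n p * v m p) :=
        Finset.sum_comm.trans (sum_congr rfl fun _ _ => Finset.sum_comm)
    _ = _ := by simp only [Finset.mul_sum]

theorem sum_sum_mul_ite_add_mul_ite_add {κ : Type*} [Fintype κ] [DecidableEq κ]
    {B : κ → κ → ℝ} (hB : ∀ k l, B k l = B l k) (X Y : κ → ℝ) (n m : κ) :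
    ∑ k, ∑ l, B k l * ((if k = n then 1 else 0) + X k) * ((if l = m then 1 else 0) + Y l)
      = ∑ k, B m k * ((if k = n then 1 else 0) + X k) + ∑ l, B n l * Y l
        + ∑ i, ∑ j, B i j * X j * Y i := by
  simp only [mul_add, add_mul, sum_add_distrib, mul_ite, ite_mul, mul_one, mul_zero, zero_mul,
    sum_ite_irrel, sum_const_zero, sum_ite_eq', mem_univ, if_true]
  have hXY : ∑ i, ∑ j, B i j * X j * Y i = ∑ k, ∑ l, B k l * X k * Y l :=
    Finset.sum_comm.trans (sum_congr rfl fun k _ => sum_congr rfl fun l _ => by rw [hB])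
  simp only [hXY, hB n m, hB _ m]
  ring

theorem integral_sum_sum_mul_mul {α ι : Type*} [MeasurableSpace α] {μ : Measure α} [Fintype ι]
    {F : ι → ι → α → ℝ} (hF : ∀ n m, Integrable (F n m) μ) (ξ : ι → ℝ) :
    ∫ x, ∑ n, ∑ m, ξ n * ξ m * F n m x ∂μ = ∑ n, ∑ m, ξ n * ξ m * ∫ x, F n m x ∂μ := by
  rw [integral_finsetSum _ fun n _ => integrable_finsetSum _ fun m _ => (hF n m).const_mul _]
  refine sum_congr rfl fun n _ => ?_
  rw [integral_finsetSum _ fun m _ => (hF n m).const_mul _]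
  exact sum_congr rfl fun m _ => integral_const_mul _ _

section Coefficients

variable {d : ℕ} {P : Coeffs d}

theorem HypAB.integrableOn_b_mul (hAB : HypAB P) (k l : Fin d) {g : (Fin d → ℝ) → ℝ}
    (hg : Continuous g) : IntegrableOn (fun y => P.b 0 y k l * g y) (cube d) :=
  hg.integrableOn_cube.bdd_mul ((hAB.b_meas k l).comp measurable_prodMk_left).aestronglyMeasurable
    (ae_of_all _ fun y => (Real.norm_eq_abs _).trans_le (hAB.b_bdd 0 y k l))

theorem HypAB.integrableOn_a_mul (hAB : HypAB P) (i j k l : Fin d) {g : (Fin d → ℝ) → ℝ}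
    (hg : Continuous g) : IntegrableOn (fun y => P.a 0 y i j k l * g y) (cube d) :=
  hg.integrableOn_cube.bdd_mul
    ((hAB.a_meas i j k l).comp measurable_prodMk_left).aestronglyMeasurable
    (ae_of_all _ fun y => (Real.norm_eq_abs _).trans_le (hAB.a_bdd 0 y i j k l))

theorem HypAB.integrableOn_sum_b_mul (hAB : HypAB P) (i : Fin d) {g : Fin d → (Fin d → ℝ) → ℝ}
    (hg : ∀ k, Continuous (g k)) : IntegrableOn (fun y => ∑ k, P.b 0 y i k * g k y) (cube d) :=
  integrable_finsetSum _ fun k _ => hAB.integrableOn_b_mul i k (hg k)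

theorem HypAB.integrableOn_sum_sum_b_mul_mul (hAB : HypAB P)
    {g h : Fin d → Fin d → (Fin d → ℝ) → ℝ} (hg : ∀ k l, Continuous (g k l))
    (hh : ∀ k l, Continuous (h k l)) :
    IntegrableOn (fun y => ∑ k, ∑ l, P.b 0 y k l * g k l y * h k l y) (cube d) :=
  integrable_finsetSum _ fun k _ => integrable_finsetSum _ fun l _ => by
    simpa only [mul_assoc, IntegrableOn] using
      hAB.integrableOn_b_mul k l (g := fun y => g k l y * h k l y) ((hg k l).mul (hh k l))

theorem HypAB.integrableOn_sum_a_mul_mul (hAB : HypAB P) {g h : Fin d → Fin d → (Fin d → ℝ) → ℝ}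
    (hg : ∀ k l, Continuous (g k l)) (hh : ∀ i j, Continuous (h i j)) :
    IntegrableOn (fun y => ∑ i, ∑ j, ∑ k, ∑ l, P.a 0 y i j k l * g k l y * h i j y) (cube d) :=
  integrable_finsetSum _ fun i _ => integrable_finsetSum _ fun j _ =>
    integrable_finsetSum _ fun k _ => integrable_finsetSum _ fun l _ => by
      simpa only [mul_assoc, IntegrableOn] using
        hAB.integrableOn_a_mul i j k l (g := fun y => g k l y * h i j y) ((hg k l).mul (hh i j))

theorem HypAB.integral_a_nonneg (hAB : HypAB P) (Z : Fin d → Fin d → (Fin d → ℝ) → ℝ) :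
    0 ≤ ∫ y in cube d, ∑ i, ∑ j, ∑ k, ∑ l, P.a 0 y i j k l * Z k l y * Z i j y := by
  refine setIntegral_nonneg (measurableSet_cube d) fun y _ => ?_
  refine (mul_nonneg hAB.Λpos.le (by positivity)).trans
    ((hAB.a_ell 0 y fun i j => Z i j y).trans_eq ?_)
  exact sum_congr rfl fun i _ => sum_congr rfl fun j _ => sum_congr rfl fun k _ =>
    sum_congr rfl fun l _ => mul_right_comm _ _ _

theorem HypAB.mul_sum_sq_integral_le_integral_b {Λ' : ℝ} (hAB : HypAB P) (hB : HypB P Λ')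
    {w : Fin d → (Fin d → ℝ) → ℝ} (hw : ∀ k, Continuous (w k)) :
    Λ' * ∑ k, (∫ y in cube d, w k y) ^ 2
      ≤ ∫ y in cube d, ∑ k, ∑ l, P.b 0 y k l * w k y * w l y := by
  have hw2 : ∀ k, IntegrableOn (fun y => w k y ^ 2) (cube d) :=
    fun k => ((hw k).pow 2).integrableOn_cube
  calc Λ' * ∑ k, (∫ y in cube d, w k y) ^ 2
      ≤ Λ' * ∑ k, ∫ y in cube d, w k y ^ 2 := by
        refine mul_le_mul_of_nonneg_left (sum_le_sum fun k _ => ?_) hB.1.le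
        exact sq_integral_le_integral_sq <| (memLp_two_iff_integrable_sq
          (hw k).aestronglyMeasurable).2 (hw2 k)
    _ = ∫ y in cube d, Λ' * ∑ k, w k y ^ 2 := by
        rw [integral_const_mul, integral_finsetSum _ fun k _ => hw2 k]
    _ ≤ ∫ y in cube d, ∑ k, ∑ l, P.b 0 y k l * w k y * w l y :=
        setIntegral_mono
          (continuous_const.mul (continuous_finsetSum _ fun k _ => (hw k).pow 2)).integrableOn_cube
          (hAB.integrableOn_sum_sum_b_mul_mul (fun k _ => hw k) fun _ l => hw l)
          fun y => hB.2 0 y fun k => w k y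

end Coefficients

section Correctors

variable {d : ℕ} (P : Coeffs d) (M : Fin d → (Fin d → ℝ) → ℝ)

/-- The gradient of the corrected coordinate `y ↦ yₙ + Mₙ(y)`. -/
def corrGrad (n k : Fin d) (y : Fin d → ℝ) : ℝ := (if k = n then 1 else 0) + pd (M n) k y

def effMatrix (i j : Fin d) : ℝ := ∫ y in cube d, ∑ k, P.b 0 y i k * corrGrad M j k y

def cellEnergy (n m : Fin d) : ℝ :=
  (∫ y in cube d, ∑ k, ∑ l, P.b 0 y k l * corrGrad M n k y * corrGrad M m l y)
    + ∫ y in cube d, ∑ i, ∑ j, ∑ k, ∑ l, P.a 0 y i j k l * pd2 (M n) k l y * pd2 (M m) i j y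

variable {P M}

theorem continuous_corrGrad {n : Fin d} (hM : ContDiff ℝ 1 (M n)) (k : Fin d) :
    Continuous (corrGrad M n k) :=
  continuous_const.add (continuous_pd hM k)

theorem integral_corrGrad {n : Fin d} (hM : ContDiff ℝ 1 (M n)) (hper : ZPer (M n)) (k : Fin d) :
    ∫ y in cube d, corrGrad M n k y = if k = n then 1 else 0 := by
  simp only [corrGrad]
  rw [integral_add (integrable_const _) (continuous_pd hM k).integrableOn_cube,
    integral_pd_eq_zero_of_zPer hM hper]
  simp

theorem integral_sum_mul_corrGrad (hM : ∀ n, ContDiff ℝ 1 (M n)) (hper : ∀ n, ZPer (M n))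
    (ξ : Fin d → ℝ) (k : Fin d) : ∫ y in cube d, ∑ n, ξ n * corrGrad M n k y = ξ k := by
  rw [integral_finsetSum _ fun n _ =>
    ((continuous_corrGrad (hM n) k).integrableOn_cube).const_mul _]
  simp [integral_const_mul, integral_corrGrad (hM _) (hper _)]

theorem cellEnergy_eq_effMatrix (hAB : HypAB P) (hM : ∀ n, IsCellM P n (M n)) (n m : Fin d) :
    cellEnergy P M n m = effMatrix P M m n := by
  have hC1 : ∀ n, ContDiff ℝ 1 (M n) := fun n => (hM n).1.of_le one_le_two
  -- the cell problem for `Mₙ`, tested with `Mₘ`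
  have hcell := (hM n).2.2 (M m) (hM m).1 (hM m).2.1
  have hexpand : ∀ y, ∑ k, ∑ l, P.b 0 y k l * corrGrad M n k y * corrGrad M m l y
      = ∑ k, P.b 0 y m k * corrGrad M n k y + ∑ l, P.b 0 y n l * pd (M m) l y
        + ∑ i, ∑ j, P.b 0 y i j * pd (M n) j y * pd (M m) i y :=
    fun y => sum_sum_mul_ite_add_mul_ite_add (hAB.b_symm 0 y) _ _ n m
  have hbeff := hAB.integrableOn_sum_b_mul m (continuous_corrGrad (hC1 n))
  have hflux := hAB.integrableOn_sum_b_mul n (continuous_pd (hC1 m))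
  have hcross := hAB.integrableOn_sum_sum_b_mul_mul (g := fun _ j => pd (M n) j)
    (h := fun i _ => pd (M m) i) (fun _ j => continuous_pd (hC1 n) j)
    fun i _ => continuous_pd (hC1 m) i
  rw [cellEnergy, effMatrix, integral_congr_ae (ae_of_all _ hexpand),
    integral_add ?_ hcross, integral_add hbeff hflux]
  · linarith
  · exact hbeff.add hflux

theorem cellEnergy_comm (hAB : HypAB P) (n m : Fin d) :
    cellEnergy P M n m = cellEnergy P M m n := by
  rw [cellEnergy, cellEnergy]
  congr 2 <;> ext y
  · exact Finset.sum_comm.trans (sum_congr rfl fun k _ => sum_congr rfl fun l _ => by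
      rw [hAB.b_symm]; ring)
  · rw [sum_sum_sum_sum_comm]
    exact sum_congr rfl fun k _ => sum_congr rfl fun l _ => sum_congr rfl fun i _ =>
      sum_congr rfl fun j _ => by rw [hAB.a_symm]; ring

theorem effMatrix_symm (hAB : HypAB P) (hM : ∀ n, IsCellM P n (M n)) (i j : Fin d) :
    effMatrix P M i j = effMatrix P M j i := by
  rw [← cellEnergy_eq_effMatrix hAB hM, cellEnergy_comm hAB, cellEnergy_eq_effMatrix hAB hM]

theorem sum_mul_mul_cellEnergy (hAB : HypAB P) (hM : ∀ n, ContDiff ℝ 2 (M n))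
    (ξ : Fin d → ℝ) :
    ∑ n, ∑ m, ξ n * ξ m * cellEnergy P M n m
      = (∫ y in cube d, ∑ k, ∑ l, P.b 0 y k l
            * (∑ n, ξ n * corrGrad M n k y) * (∑ m, ξ m * corrGrad M m l y))
        + ∫ y in cube d, ∑ i, ∑ j, ∑ k, ∑ l, P.a 0 y i j k l
            * (∑ n, ξ n * pd2 (M n) k l y) * (∑ m, ξ m * pd2 (M m) i j y) := by
  have hG : ∀ n k, Continuous (corrGrad M n k) :=
    fun n => continuous_corrGrad ((hM n).of_le one_le_two)
  simp only [cellEnergy, mul_add, sum_add_distrib]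
  rw [← integral_sum_sum_mul_mul (fun n m => hAB.integrableOn_sum_sum_b_mul_mul
      (g := fun k _ => corrGrad M n k) (h := fun _ l => corrGrad M m l)
      (fun k _ => hG n k) fun _ l => hG m l),
    ← integral_sum_sum_mul_mul (fun n m => hAB.integrableOn_sum_a_mul_mul
      (fun k l => continuous_pd2 (hM n) k l) fun i j => continuous_pd2 (hM m) i j)]
  congr 2 <;> ext y
  · simpa only [Fintype.sum_prod_type] using (sum_mul_sum_mul_sum (κ := Fin d × Fin d) ξ
      (fun p => P.b 0 y p.1 p.2) (fun n p => corrGrad M n p.1 y) fun m p => corrGrad M m p.2 y).symm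
  · simpa only [Fintype.sum_prod_type] using (sum_mul_sum_mul_sum
      (κ := (Fin d × Fin d) × (Fin d × Fin d)) ξ (fun p => P.a 0 y p.1.1 p.1.2 p.2.1 p.2.2)
      (fun n p => pd2 (M n) p.2.1 p.2.2 y) fun m p => pd2 (M m) p.1.1 p.1.2 y).symm

end Correctors

theorem statement18_general {d : ℕ} (P : Coeffs d)
    (hAB : HypAB P) (Λ' : ℝ) (hH5 : HypB P Λ')
    (M : Fin d → (Fin d → ℝ) → ℝ) (hM : ∀ n, IsCellM P n (M n)) :
    (∀ i j,
      (∫ y in cube d, ∑ k, P.b 0 y i k * ((if k = j then (1:ℝ) else 0) + pd (M j) k y)) =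
      (∫ y in cube d, ∑ k, P.b 0 y j k * ((if k = i then (1:ℝ) else 0) + pd (M i) k y))) ∧
    ∃ C > (0:ℝ), ∀ ξ : Fin d → ℝ,
      C * (∑ i, ξ i ^ 2) ≤ ∑ i, ∑ j,
        (∫ y in cube d, ∑ k, P.b 0 y i k * ((if k = j then (1:ℝ) else 0) + pd (M j) k y))
          * ξ i * ξ j := by
  have hC1 : ∀ n, ContDiff ℝ 1 (M n) := fun n => (hM n).1.of_le one_le_two
  refine ⟨effMatrix_symm hAB hM, Λ', hH5.1, fun ξ => ?_⟩
  calc Λ' * ∑ k, ξ k ^ 2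
      = Λ' * ∑ k, (∫ y in cube d, ∑ n, ξ n * corrGrad M n k y) ^ 2 := by
        simp only [integral_sum_mul_corrGrad hC1 (fun n => (hM n).2.1)]
    _ ≤ ∫ y in cube d, ∑ k, ∑ l, P.b 0 y k l
          * (∑ n, ξ n * corrGrad M n k y) * (∑ m, ξ m * corrGrad M m l y) :=
        hAB.mul_sum_sq_integral_le_integral_b hH5 fun k => continuous_finsetSum _ fun n _ =>
          continuous_const.mul (continuous_corrGrad (hC1 n) k)
    _ ≤ ∑ n, ∑ m, ξ n * ξ m * cellEnergy P M n m := by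
        rw [sum_mul_mul_cellEnergy hAB fun n => (hM n).1]
        exact le_add_of_nonneg_right (hAB.integral_a_nonneg _)
    _ = ∑ i, ∑ j, effMatrix P M i j * ξ i * ξ j := by
        refine sum_congr rfl fun i _ => sum_congr rfl fun j _ => ?_
        rw [cellEnergy_eq_effMatrix hAB hM, effMatrix_symm hAB hM]
        ring

/-- Lemma 4.1: the effective matrix `b^eff` built from the fourth-order cell correctors
is symmetric and coercive on `ℝ^d`. -/
theorem statement18 {d : ℕ} (hd : 1 ≤ d) (P : Coeffs d)
    (hAB : HypAB P) (Λ' : ℝ) (hH5 : HypB P Λ')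
    (M : Fin d → (Fin d → ℝ) → ℝ) (hM : ∀ n, IsCellM P n (M n)) :
    (∀ i j,
      (∫ y in cube d, ∑ k, P.b 0 y i k * ((if k = j then (1:ℝ) else 0) + pd (M j) k y)) =
      (∫ y in cube d, ∑ k, P.b 0 y j k * ((if k = i then (1:ℝ) else 0) + pd (M i) k y))) ∧
    ∃ C > (0:ℝ), ∀ ξ : Fin d → ℝ,
      C * (∑ i, ξ i ^ 2) ≤ ∑ i, ∑ j,
        (∫ y in cube d, ∑ k, P.b 0 y i k * ((if k = j then (1:ℝ) else 0) + pd (M j) k y))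
          * ξ i * ξ j :=
  statement18_general P hAB Λ' hH5 M hM

end
end
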